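/- arXiv:2008.11193 — 6 statements merged into one kernel-verified Lean document; each statement's English description precedes it below -/
import Mathlib

section
/- For two Gaussian distributions N(μ₁, σ²) and N(μ₂, σ²) on ℝ with equal variance σ² > 0, the Rényi divergence of order α > 1 satisfies D_α(N(μ₁,σ²) ‖ N(μ₂,σ²)) = α(μ₁ - μ₂)²/(2σ²). -/
open MeasureTheory ProbabilityTheory Real
open scoped NNReal ENNReal

/-- Rényi divergence of order `α`: `D_α(μ‖ν) = (α-1)⁻¹ log ∫ (dμ/dν)^α dν`. -/
noncomputable def renyiDiv {Ω : Type*} [MeasurableSpace Ω] (α : ℝ) (μ ν : Measure Ω) : ℝ :=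
  (α - 1)⁻¹ * Real.log (∫ x, ((μ.rnDeriv ν) x).toReal ^ α ∂ν)

lemma gaussian_ratio_pow (v : ℝ≥0) (hv : v ≠ 0) (μ₁ μ₂ α x : ℝ) :
    ((gaussianPDFReal μ₂ v x)⁻¹ * gaussianPDFReal μ₁ v x) ^ α * gaussianPDFReal μ₂ v x
      = Real.exp (α * (α - 1) * (μ₁ - μ₂) ^ 2 / (2 * v)) *
        gaussianPDFReal (α * μ₁ + (1 - α) * μ₂) v x := by
  have hv' : (0:ℝ) < v := lt_of_le_of_ne v.coe_nonneg (by exact_mod_cast (Ne.symm hv))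
  have hc : (0:ℝ) < Real.sqrt (2 * π * v) := Real.sqrt_pos.2 (by positivity)
  simp only [gaussianPDFReal]
  have hratio : ((Real.sqrt (2 * π * v))⁻¹ * Real.exp (-(x - μ₂) ^ 2 / (2 * v)))⁻¹ *
      ((Real.sqrt (2 * π * v))⁻¹ * Real.exp (-(x - μ₁) ^ 2 / (2 * v)))
      = Real.exp (-(x - μ₁) ^ 2 / (2 * v) - -(x - μ₂) ^ 2 / (2 * v)) := by
    rw [Real.exp_sub]
    field_simp
  rw [hratio, ← Real.exp_mul, mul_left_comm, ← Real.exp_add,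
    mul_left_comm (Real.exp (α * (α - 1) * (μ₁ - μ₂) ^ 2 / (2 * (v:ℝ)))), ← Real.exp_add]
  congr 1
  have hne : (v:ℝ) ≠ 0 := ne_of_gt hv'
  field_simp
  ring

/-- For equal-variance Gaussians, `D_α(N(μ₁,σ²)‖N(μ₂,σ²)) = α(μ₁-μ₂)²/(2σ²)`. -/
theorem renyiDiv_gaussian_eq (σ : NNReal) (hσ : 0 < σ) (μ₁ μ₂ : ℝ) (α : ℝ) (hα : 1 < α) :
    renyiDiv α (gaussianReal μ₁ (σ ^ 2)) (gaussianReal μ₂ (σ ^ 2)) =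
      α * (μ₁ - μ₂) ^ 2 / (2 * (σ : ℝ) ^ 2) := by
  set v : ℝ≥0 := σ ^ 2 with hvdef
  have hv : v ≠ 0 := pow_ne_zero _ hσ.ne'
  have hv' : (0:ℝ) < v := lt_of_le_of_ne v.coe_nonneg (by exact_mod_cast (Ne.symm hv))
  set P := gaussianReal μ₁ v
  set Q := gaussianReal μ₂ v
  -- rnDeriv formula
  have hQdens : Q = volume.withDensity (gaussianPDF μ₂ v) := gaussianReal_of_var_ne_zero _ hv
  have hne_zero : ∀ᵐ x ∂(volume : Measure ℝ), gaussianPDF μ₂ v x ≠ 0 :=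
    Filter.Eventually.of_forall fun x => (gaussianPDF_pos _ hv _).ne'
  have hne_top : ∀ᵐ x ∂(volume : Measure ℝ), gaussianPDF μ₂ v x ≠ ⊤ :=
    Filter.Eventually.of_forall fun x => ENNReal.ofReal_ne_top
  have h1 : P.rnDeriv Q =ᵐ[volume]
      fun x => (gaussianPDF μ₂ v x)⁻¹ * P.rnDeriv volume x := by
    rw [hQdens]
    exact Measure.rnDeriv_withDensity_right P volume
      (measurable_gaussianPDF μ₂ v).aemeasurable hne_zero hne_top
  have h2 : P.rnDeriv Q =ᵐ[volume]
      fun x => (gaussianPDF μ₂ v x)⁻¹ * gaussianPDF μ₁ v x := by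
    filter_upwards [h1, rnDeriv_gaussianReal μ₁ v] with x hx hx'
    rw [hx, hx']
  have hQac : Q ≪ volume := gaussianReal_absolutelyContinuous _ hv
  have h3 : (fun x => ((P.rnDeriv Q) x).toReal ^ α) =ᵐ[Q]
      fun x => ((gaussianPDFReal μ₂ v x)⁻¹ * gaussianPDFReal μ₁ v x) ^ α := by
    refine hQac.ae_eq ?_
    filter_upwards [h2] with x hx
    rw [hx]
    simp only [ENNReal.toReal_mul, ENNReal.toReal_inv, gaussianPDF,
      ENNReal.toReal_ofReal (gaussianPDFReal_nonneg _ _ _)]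
  -- compute the integral
  have hint : ∫ x, ((P.rnDeriv Q) x).toReal ^ α ∂Q
      = Real.exp (α * (α - 1) * (μ₁ - μ₂) ^ 2 / (2 * v)) := by
    rw [integral_congr_ae h3, hQdens]
    have hpdf_eq : gaussianPDF μ₂ v = fun x => ((gaussianPDFReal μ₂ v x).toNNReal : ℝ≥0∞) := by
      funext x; rfl
    rw [hpdf_eq, integral_withDensity_eq_integral_smul
      (measurable_gaussianPDFReal μ₂ v).real_toNNReal]
    have : (fun x => (gaussianPDFReal μ₂ v x).toNNReal •
        ((gaussianPDFReal μ₂ v x)⁻¹ * gaussianPDFReal μ₁ v x) ^ α)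
        = fun x => Real.exp (α * (α - 1) * (μ₁ - μ₂) ^ 2 / (2 * v)) *
          gaussianPDFReal (α * μ₁ + (1 - α) * μ₂) v x := by
      funext x
      rw [NNReal.smul_def, Real.coe_toNNReal _ (gaussianPDFReal_nonneg _ _ _), smul_eq_mul,
        mul_comm]
      exact gaussian_ratio_pow v hv μ₁ μ₂ α x
    rw [this, integral_const_mul, integral_gaussianPDFReal_eq_one _ hv, mul_one]
  rw [renyiDiv, hint, Real.log_exp]
  have hα1 : α - 1 ≠ 0 := sub_ne_zero.2 (ne_of_gt hα)
  have hσ' : (σ:ℝ) ≠ 0 := by exact_mod_cast hσ.ne'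
  have hvc : (v:ℝ) = (σ:ℝ)^2 := by rw [hvdef]; push_cast; ring
  rw [hvc]
  field_simp
end

section
/- Let (a_t)_{t=1}^k be the outputs of an adaptive composition of algorithms A_1,…,A_k applied to dataset S', and for a second dataset S define Loss^{(t)}(a^{(t)}) = (P[A^{(t)}(S)=a^{(t)}]/P[A^{(t)}(S')=a^{(t)}])^α, the α-th power of the likelihood ratio of the first t outputs. Let ρ_t be the conditional Rényi parameter of step t given a^{(t-1)}, i.e. E[Loss_t(a^{(t)}) | a^{(t-1)}] ≤ e^{(α−1)ρ_t} where Loss_t is the per-round α-power likelihood ratio. Then M_t := Loss^{(t)}(a^{(t)}) · e^{−(α−1)Σ_{j≤t} ρ_j}, with M_0 = 1, is a supermartingale with respect to the filtration F_t = σ(a_1,…,a_t). -/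
open scoped BigOperators

/-- Law of the first `k` outputs of an adaptive composition with per-round conditional
distributions `p t h` (the distribution of round `t+1`'s output given history `h`). -/
noncomputable def joint {𝒪 : Type*} (p : ℕ → List 𝒪 → PMF 𝒪) : ℕ → PMF (List 𝒪)
  | 0 => PMF.pure []
  | (k + 1) => (joint p (k : ℕ)).bind fun h => (p k h).map fun a => h ++ [a]

/-- Per-round `α`-power likelihood ratio `Loss_t`. -/
noncomputable def lossStep {𝒪 : Type*} (pS pS' : ℕ → List 𝒪 → PMF 𝒪) (α : ℝ)
    (t : ℕ) (h : List 𝒪) (a : 𝒪) : ℝ :=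
  (((pS t h) a).toReal / ((pS' t h) a).toReal) ^ α

/-- Total `α`-power likelihood ratio `Loss^{(t)}` of the first `t` outputs. -/
noncomputable def lossTot {𝒪 : Type*} (pS pS' : ℕ → List 𝒪 → PMF 𝒪) (α : ℝ)
    (t : ℕ) (h : List 𝒪) : ℝ :=
  (((joint pS t) h).toReal / ((joint pS' t) h).toReal) ^ α

/-- The process `M_t = Loss^{(t)}(a^{(t)}) e^{-(α-1)Σ_{j≤t} ρ_j}`. -/
noncomputable def Mart {𝒪 : Type*} (pS pS' : ℕ → List 𝒪 → PMF 𝒪) (α : ℝ)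
    (ρ : ℕ → List 𝒪 → ℝ) (h : List 𝒪) : ℝ :=
  lossTot pS pS' α h.length h *
    Real.exp (-(α - 1) * ∑ j ∈ Finset.range h.length, ρ j (h.take j))

lemma joint_length {𝒪 : Type*} (p : ℕ → List 𝒪 → PMF 𝒪) :
    ∀ (k : ℕ) (l : List 𝒪), (joint p k) l ≠ 0 → l.length = k := by
  intro k
  induction k with
  | zero =>
    intro l hl
    simp only [joint, PMF.pure_apply] at hl
    by_cases h : l = []
    · simp [h]
    · simp [h] at hl
  | succ k ih =>
    intro l hl
    simp only [joint, PMF.bind_apply] at hl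
    rw [ne_eq, ENNReal.tsum_eq_zero] at hl
    push_neg at hl
    obtain ⟨h, hh⟩ := hl
    have h1 : (joint p k) h ≠ 0 := by intro h0; simp [h0] at hh
    have h2 : ((p k h).map (fun a => h ++ [a])) l ≠ 0 := by intro h0; simp [h0] at hh
    rw [PMF.map_apply, ne_eq, ENNReal.tsum_eq_zero] at h2
    push_neg at h2
    obtain ⟨a, ha⟩ := h2
    have hla : l = h ++ [a] := by by_contra hne; simp [hne] at ha
    subst hla
    simp [ih h h1]

lemma joint_succ_apply {𝒪 : Type*} (p : ℕ → List 𝒪 → PMF 𝒪) (k : ℕ) (h : List 𝒪) (a : 𝒪)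
    (hl : h.length = k) :
    (joint p (k+1)) (h ++ [a]) = (joint p k) h * (p k h) a := by
  simp only [joint, PMF.bind_apply]
  rw [tsum_eq_single h ?_]
  · rw [PMF.map_apply, tsum_eq_single a ?_]
    · simp
    · intro a' ha'
      rw [if_neg]
      intro he
      exact ha' (by simpa using he.symm)
  · intro h' hh'
    by_cases h0 : (joint p k) h' = 0
    · simp [h0]
    · have hlen := joint_length p k h' h0
      rw [PMF.map_apply]
      have hz : ∀ a', ¬ (h ++ [a] = h' ++ [a']) := by
        intro a' he
        exact hh' ((List.append_inj he.symm (by rw [hlen, hl])).1)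
      simp [hz]

/-- `M_t` is a supermartingale with respect to the filtration generated by the outputs
(drawn from `S'`): conditionally on any history `h` of positive probability, the expected
next value of `M` is at most the current value.  Here `ρ t h` is the conditional Rényi
parameter of step `t+1` given history `h`, i.e. `E[Loss_t | h] ≤ e^{(α-1)ρ_t}`. -/
theorem supermartingale_renyi_loss {𝒪 : Type*} (pS pS' : ℕ → List 𝒪 → PMF 𝒪)
    (α : ℝ) (hα : 1 < α) (ρ : ℕ → List 𝒪 → ℝ)
    (hρ : ∀ (t : ℕ) (h : List 𝒪), h.length = t → (joint pS' t) h ≠ 0 →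
      ∑' a : 𝒪, ((pS' t h) a).toReal * lossStep pS pS' α t h a ≤ Real.exp ((α - 1) * ρ t h)) :
    ∀ (t : ℕ) (h : List 𝒪), h.length = t → (joint pS' t) h ≠ 0 →
      ∑' a : 𝒪, ((pS' t h) a).toReal * Mart pS pS' α ρ (h ++ [a]) ≤ Mart pS pS' α ρ h := by
  intro t h hlen hne
  set S : ℝ := ∑ j ∈ Finset.range t, ρ j (h.take j) with hS
  set L : ℝ := lossTot pS pS' α t h with hL
  have hLnn : 0 ≤ L := Real.rpow_nonneg (div_nonneg ENNReal.toReal_nonneg ENNReal.toReal_nonneg) α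
  set C : ℝ := L * Real.exp (-(α - 1) * (S + ρ t h)) with hC
  have hCnn : 0 ≤ C := mul_nonneg hLnn (Real.exp_pos _).le
  have key : ∀ a : 𝒪, Mart pS pS' α ρ (h ++ [a]) = C * lossStep pS pS' α t h a := by
    intro a
    have hlen2 : (h ++ [a]).length = t + 1 := by simp [hlen]
    have hsum : ∑ j ∈ Finset.range (t+1), ρ j ((h ++ [a]).take j) = S + ρ t h := by
      rw [Finset.sum_range_succ]
      congr 1
      · apply Finset.sum_congr rfl
        intro j hj
        rw [List.take_append_of_le_length (by rw [hlen]; exact (Finset.mem_range.mp hj).le)]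
      · congr 1
        rw [← hlen, List.take_left]
    have hloss : lossTot pS pS' α (t+1) (h ++ [a]) = L * lossStep pS pS' α t h a := by
      rw [hL, lossTot, lossTot, lossStep, joint_succ_apply pS t h a hlen,
        joint_succ_apply pS' t h a hlen, ENNReal.toReal_mul, ENNReal.toReal_mul,
        ← div_mul_div_comm,
        Real.mul_rpow (div_nonneg ENNReal.toReal_nonneg ENNReal.toReal_nonneg)
          (div_nonneg ENNReal.toReal_nonneg ENNReal.toReal_nonneg)]
    rw [Mart, hlen2, hsum, hloss, hC]
    ring
  calc ∑' a : 𝒪, ((pS' t h) a).toReal * Mart pS pS' α ρ (h ++ [a])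
      = C * ∑' a : 𝒪, ((pS' t h) a).toReal * lossStep pS pS' α t h a := by
        rw [← tsum_mul_left]
        apply tsum_congr
        intro a
        rw [key a]; ring
    _ ≤ C * Real.exp ((α - 1) * ρ t h) :=
        mul_le_mul_of_nonneg_left (hρ t h hlen hne) hCnn
    _ = Mart pS pS' α ρ h := by
        rw [Mart, hlen, hC, ← hS, mul_assoc, ← Real.exp_add]
        congr 2
        ring
end

section
/- If an algorithm is ε-differentially private (pure DP), then for every α > 1 it is (α, ½ε²α)-Rényi differentially private, i.e., the Rényi divergence of order α between outputs on neighboring datasets is at most αε²/2. -/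
/-!
Write `r = dμ/dν`, so that `∫ r dν = 1` and `e^{-ε} ≤ r ≤ e^ε`. Since `t ↦ t^α` is convex, `r^α`
lies below the chord of `t^α` over `[e^{-ε}, e^ε]`; integrating, `∫ r^α dν` is at most the value
of that chord at the mean `1`, which works out to `cosh((α - 1/2)ε) / cosh(ε/2)`. As `tanh t ≤ t`,
the function `log cosh t - t²/2` is antitone on `t ≥ 0`, which bounds this ratio by
`exp(α(α - 1)ε²/2)`; taking `log` and dividing by `α - 1` gives `αε²/2`.
-/

open MeasureTheory Real

namespace Real

theorem sinh_le_mul_cosh {t : ℝ} (ht : 0 ≤ t) : sinh t ≤ t * cosh t := by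
  refine hasSum_le (fun n => ?_) (hasSum_sinh t) ((hasSum_cosh t).mul_left t)
  rw [pow_succ', mul_div_assoc]
  gcongr
  omega

theorem antitoneOn_log_cosh_sub_sq :
    AntitoneOn (fun t => log (cosh t) - t ^ 2 / 2) (Set.Ici 0) := by
  refine antitoneOn_of_hasDerivWithinAt_nonpos (f' := fun t => sinh t / cosh t - t)
    (convex_Ici 0)
    ((continuous_cosh.log fun t => (cosh_pos t).ne').sub (by fun_prop)).continuousOn
    (fun t _ => ?_) (fun t ht => ?_)
  · have hsq : HasDerivAt (fun t : ℝ => t ^ 2 / 2) t t := by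
      simpa using (hasDerivAt_pow 2 t).div_const 2
    exact (((hasDerivAt_cosh t).log (cosh_pos t).ne').sub hsq).hasDerivWithinAt
  · rw [interior_Ici, Set.mem_Ioi] at ht
    rw [sub_nonpos, div_le_iff₀ (cosh_pos t)]
    exact sinh_le_mul_cosh ht.le

theorem cosh_le_cosh_mul_exp {c d : ℝ} (hd : 0 ≤ d) (hdc : d ≤ c) :
    cosh c ≤ cosh d * exp ((c ^ 2 - d ^ 2) / 2) := by
  have h : log (cosh c) - c ^ 2 / 2 ≤ log (cosh d) - d ^ 2 / 2 :=
    antitoneOn_log_cosh_sub_sq (Set.mem_Ici.2 hd) (Set.mem_Ici.2 (hd.trans hdc)) hdc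
  rw [← exp_log (cosh_pos c), ← exp_log (cosh_pos d), ← exp_add]
  exact exp_le_exp.2 (by linarith)

theorem rpow_exp_neg_add_mul_slope_eq (α ε : ℝ) :
    exp (-ε) ^ α + (1 - exp (-ε)) * slope (fun t => t ^ α) (exp (-ε)) (exp ε)
      = cosh ((α - 1 / 2) * ε) / cosh (ε / 2) := by
  rcases eq_or_ne ε 0 with rfl | hε
  · simp
  have hu : exp ε = exp (ε / 2) ^ 2 := by rw [← exp_nat_mul]; ring_nf
  have huv : exp (ε * α) = exp (ε / 2) * exp ((α - 1 / 2) * ε) := by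
    rw [← exp_add]; ring_nf
  have hu4 : exp (ε / 2) ^ 4 - 1 ≠ 0 := by
    rw [sub_ne_zero, ← exp_nat_mul, Ne, exp_eq_one_iff]
    exact fun h => hε (by linarith)
  have hu0 := (exp_pos (ε / 2)).ne'
  have hv0 := (exp_pos ((α - 1 / 2) * ε)).ne'
  rw [slope_def_field, ← exp_mul, ← exp_mul, cosh_eq, cosh_eq]
  simp only [neg_mul, exp_neg, hu, huv]
  generalize exp (ε / 2) = u at *
  generalize exp ((α - 1 / 2) * ε) = v at *
  field_simp
  ring

theorem cosh_div_cosh_le_exp {α ε : ℝ} (hα : 1 ≤ α) (hε : 0 ≤ ε) :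
    cosh ((α - 1 / 2) * ε) / cosh (ε / 2) ≤ exp (α * (α - 1) * ε ^ 2 / 2) := by
  have h := cosh_le_cosh_mul_exp (c := (α - 1 / 2) * ε) (d := ε / 2) (by positivity)
    (by nlinarith)
  rwa [show (((α - 1 / 2) * ε) ^ 2 - (ε / 2) ^ 2) / 2 = α * (α - 1) * ε ^ 2 / 2 by ring,
    ← div_le_iff₀' (cosh_pos _)] at h

end Real

theorem ConvexOn.le_add_mul_slope {s : Set ℝ} {f : ℝ → ℝ} (hf : ConvexOn ℝ s f) {a b t : ℝ}
    (ha : a ∈ s) (hb : b ∈ s) (hat : a ≤ t) (htb : t ≤ b) :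
    f t ≤ f a + (t - a) * slope f a b := by
  rcases hat.eq_or_lt with rfl | hat
  · simp
  have ht : t ∈ s := hf.1.ordConnected.out ha hb ⟨hat.le, htb⟩
  have hsec := hf.secant_mono ha ht hb hat.ne' (hat.trans_le htb).ne' htb
  rw [slope_def_field]
  calc f t = f a + (t - a) * ((f t - f a) / (t - a)) := by field_simp; ring
    _ ≤ f a + (t - a) * ((f b - f a) / (b - a)) := by gcongr

section

variable {Ω : Type*} [MeasurableSpace Ω] {ν : Measure Ω}

theorem ConvexOn.integral_comp_le_add_mul_slope [IsProbabilityMeasure ν] {s : Set ℝ}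
    {f : ℝ → ℝ} (hf : ConvexOn ℝ s f) {a b : ℝ} (ha : a ∈ s) (hb : b ∈ s) {X : Ω → ℝ}
    (hX : Integrable X ν) (hfX : Integrable (fun x => f (X x)) ν)
    (hXa : ∀ᵐ x ∂ν, a ≤ X x) (hXb : ∀ᵐ x ∂ν, X x ≤ b) :
    ∫ x, f (X x) ∂ν ≤ f a + ((∫ x, X x ∂ν) - a) * slope f a b := by
  have hchord : Integrable (fun x => (X x - a) * slope f a b) ν :=
    (hX.sub (integrable_const a)).mul_const _
  calc ∫ x, f (X x) ∂ν ≤ ∫ x, f a + (X x - a) * slope f a b ∂ν := by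
        refine integral_mono_ae hfX ((integrable_const _).add hchord) ?_
        filter_upwards [hXa, hXb] with x hxa hxb
        exact hf.le_add_mul_slope ha hb hxa hxb
    _ = f a + ((∫ x, X x ∂ν) - a) * slope f a b := by
        rw [integral_add (integrable_const _) hchord, integral_mul_const,
          integral_sub hX (integrable_const a)]
        simp

theorem integrable_rpow_of_ae_le [IsFiniteMeasure ν] {f : Ω → ℝ}
    (hf : AEStronglyMeasurable f ν) {α C : ℝ} (hα : 0 ≤ α) (hf0 : ∀ᵐ x ∂ν, 0 ≤ f x)
    (hfC : ∀ᵐ x ∂ν, f x ≤ C) : Integrable (fun x => f x ^ α) ν := by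
  refine .of_bound ((continuous_rpow_const hα).comp_aestronglyMeasurable hf) (C ^ α) ?_
  filter_upwards [hf0, hfC] with x h0 hC
  rw [norm_of_nonneg (rpow_nonneg h0 α)]
  exact rpow_le_rpow h0 hC hα

theorem integral_rpow_le_exp_of_ae_mem_Icc [IsProbabilityMeasure ν] {r : Ω → ℝ}
    (hr : Integrable r ν) (hr1 : ∫ x, r x ∂ν = 1) {α ε : ℝ} (hα : 1 ≤ α) (hε : 0 ≤ ε)
    (hub : ∀ᵐ x ∂ν, r x ≤ exp ε) (hlb : ∀ᵐ x ∂ν, exp (-ε) ≤ r x)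
    (hrα : Integrable (fun x => r x ^ α) ν) :
    ∫ x, r x ^ α ∂ν ≤ exp (α * (α - 1) * ε ^ 2 / 2) := by
  have hchord := (convexOn_rpow hα).integral_comp_le_add_mul_slope
    (Set.mem_Ici.2 (exp_pos (-ε)).le) (Set.mem_Ici.2 (exp_pos ε).le) hr hrα hlb hub
  rw [hr1, rpow_exp_neg_add_mul_slope_eq] at hchord
  exact hchord.trans (cosh_div_cosh_le_exp hα hε)

end

theorem pure_dp_implies_rdp_general {Ω : Type*} [MeasurableSpace Ω] (μ ν : Measure Ω)
    [IsProbabilityMeasure μ] [IsProbabilityMeasure ν]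
    (hac : μ ≪ ν) (ε : ℝ) (hε : 0 ≤ ε)
    (hub : ∀ᵐ x ∂ν, ((μ.rnDeriv ν) x).toReal ≤ Real.exp ε)
    (hlb : ∀ᵐ x ∂ν, Real.exp (-ε) ≤ ((μ.rnDeriv ν) x).toReal)
    (α : ℝ) (hα : 1 < α) :
    renyiDiv α μ ν ≤ α * ε ^ 2 / 2 := by
  have hr : Integrable (fun x => (μ.rnDeriv ν x).toReal) ν :=
    Measure.integrable_toReal_rnDeriv
  have hr1 : ∫ x, (μ.rnDeriv ν x).toReal ∂ν = 1 := by
    rw [Measure.integral_toReal_rnDeriv hac]; simp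
  have hr0 : ∀ᵐ x ∂ν, 0 ≤ (μ.rnDeriv ν x).toReal :=
    ae_of_all _ fun _ => ENNReal.toReal_nonneg
  have hrα : Integrable (fun x => (μ.rnDeriv ν x).toReal ^ α) ν :=
    integrable_rpow_of_ae_le hr.aestronglyMeasurable (by linarith) hr0 hub
  have hone_le : 1 ≤ ∫ x, (μ.rnDeriv ν x).toReal ^ α ∂ν := by
    simpa [hr1] using (convexOn_rpow hα.le).map_integral_le
      (continuous_rpow_const (by linarith)).continuousOn isClosed_Ici hr0 hr hrα
  have hle := integral_rpow_le_exp_of_ae_mem_Icc hr hr1 hα.le hε hub hlb hrα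
  rw [renyiDiv, inv_mul_le_iff₀ (by linarith), log_le_iff_le_exp (by linarith)]
  convert hle using 2
  ring

/-- DP-to-zCDP conversion (Bun–Steinke): if the likelihood ratio between the output
distributions `μ, ν` on neighboring datasets is bounded, `e^{-ε} ≤ dμ/dν ≤ e^{ε}`
(pure `ε`-DP), then for every `α > 1` the order-`α` Rényi divergence is at most `αε²/2`. -/
theorem pure_dp_implies_rdp {Ω : Type*} [MeasurableSpace Ω] (μ ν : Measure Ω)
    [IsProbabilityMeasure μ] [IsProbabilityMeasure ν]
    (hac : μ ≪ ν) (hac' : ν ≪ μ) (ε : ℝ) (hε : 0 ≤ ε)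
    (hub : ∀ᵐ x ∂ν, ((μ.rnDeriv ν) x).toReal ≤ Real.exp ε)
    (hlb : ∀ᵐ x ∂ν, Real.exp (-ε) ≤ ((μ.rnDeriv ν) x).toReal)
    (α : ℝ) (hα : 1 < α) :
    renyiDiv α μ ν ≤ α * ε ^ 2 / 2 :=
  pure_dp_implies_rdp_general μ ν hac ε hε hub hlb α hα
end

section
/- Adaptive composition of k algorithms each of which is ε-differentially private (pure DP) satisfies (½kε² + ε√(2k·log(1/δ)), δ)-differential privacy, for every δ ∈ (0,1). -/
/-!
For a pure `ε`-DP round the likelihood ratio `P/Q` lies in `[e^{-ε}, e^ε]`, so by convexity of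
`t ↦ t^c` its Rényi moment `∑ P^c Q^(1-c)` of order `c ≥ 1` is at most the value of the chord
through the endpoints, which is the moment of a two-point distribution. That value is
`cosh ((c - ½)ε) / cosh (ε/2)`, and since `tanh t ≤ t` it is at most `exp (c(c-1)ε²/2)`.

Rényi moments multiply along an adaptive composition, so after `k` rounds the moment is at most
`exp (k c(c-1)ε²/2)`. Markov's inequality for the privacy loss turns this into
`(B, exp (-(c-1)B + k c(c-1)ε²/2))`-DP, and the order `c = 1 + √(2 log(1/δ)/k)/ε` makes the
second parameter `δ` for `B = kε²/2 + ε√(2k log(1/δ))`.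
-/

open scoped BigOperators

open Real
open scoped ENNReal

theorem Real.sinh_le_mul_cosh_s11 {t : ℝ} (ht : 0 ≤ t) : sinh t ≤ t * cosh t := by
  have hderiv (x : ℝ) : HasDerivAt (fun y ↦ y * cosh y - sinh y) (x * sinh x) x :=
    (((hasDerivAt_id x).mul (hasDerivAt_cosh x)).sub (hasDerivAt_sinh x)).congr_deriv
      (by simp)
  have hmono : MonotoneOn (fun y ↦ y * cosh y - sinh y) (Set.Ici 0) := by
    refine monotoneOn_of_deriv_nonneg (convex_Ici 0)
      (fun x _ ↦ (hderiv x).continuousAt.continuousWithinAt)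
      (fun x _ ↦ (hderiv x).differentiableAt.differentiableWithinAt) fun x hx ↦ ?_
    rw [interior_Ici, Set.mem_Ioi] at hx
    rw [(hderiv x).deriv]
    exact mul_nonneg hx.le (sinh_nonneg_iff.2 hx.le)
  simpa using hmono Set.self_mem_Ici ht ht

theorem Real.antitoneOn_cosh_mul_exp_neg_sq_div_two :
    AntitoneOn (fun t ↦ cosh t * exp (-(t ^ 2) / 2)) (Set.Ici 0) := by
  have hderiv (x : ℝ) : HasDerivAt (fun t ↦ cosh t * exp (-(t ^ 2) / 2))
      ((sinh x - x * cosh x) * exp (-(x ^ 2) / 2)) x := by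
    have hsq : HasDerivAt (fun t : ℝ ↦ -(t ^ 2) / 2) (-x) x :=
      ((hasDerivAt_pow 2 x).neg.div_const 2).congr_deriv (by ring)
    exact ((hasDerivAt_cosh x).mul hsq.exp).congr_deriv (by ring)
  refine antitoneOn_of_deriv_nonpos (convex_Ici 0)
    (fun x _ ↦ (hderiv x).continuousAt.continuousWithinAt)
    (fun x _ ↦ (hderiv x).differentiableAt.differentiableWithinAt) fun x hx ↦ ?_
  rw [interior_Ici, Set.mem_Ioi] at hx
  rw [(hderiv x).deriv]
  exact mul_nonpos_of_nonpos_of_nonneg (sub_nonpos.2 (sinh_le_mul_cosh_s11 hx.le)) (exp_pos _).le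

theorem Real.cosh_le_exp_mul_cosh {u v : ℝ} (hu : 0 ≤ u) (huv : u ≤ v) :
    cosh v ≤ exp ((v ^ 2 - u ^ 2) / 2) * cosh u := by
  have hanti := antitoneOn_cosh_mul_exp_neg_sq_div_two hu (hu.trans huv) huv
  have hsplit (t : ℝ) : exp (-(t ^ 2) / 2) * exp (t ^ 2 / 2) = 1 := by
    rw [← exp_add, neg_div, neg_add_cancel, exp_zero]
  calc cosh v = cosh v * exp (-(v ^ 2) / 2) * exp (v ^ 2 / 2) := by
        rw [mul_assoc, hsplit, mul_one]
    _ ≤ cosh u * exp (-(u ^ 2) / 2) * exp (v ^ 2 / 2) :=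
        mul_le_mul_of_nonneg_right hanti (exp_pos _).le
    _ = exp ((v ^ 2 - u ^ 2) / 2) * cosh u := by
      rw [mul_assoc, ← exp_add, mul_comm]
      ring_nf

theorem ConvexOn.mul_le_chord {s : Set ℝ} {f : ℝ → ℝ} (hf : ConvexOn ℝ s f) {a b t : ℝ}
    (ha : a ∈ s) (hb : b ∈ s) (hat : a ≤ t) (htb : t ≤ b) :
    (b - a) * f t ≤ (b - t) * f a + (t - a) * f b := by
  rcases (hat.trans htb).eq_or_lt with rfl | hab
  · obtain rfl := le_antisymm htb hat
    simp
  have hba : 0 < b - a := sub_pos.2 hab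
  have key := hf.2 ha hb (div_nonneg (sub_nonneg.2 htb) hba.le)
    (div_nonneg (sub_nonneg.2 hat) hba.le) (by field_simp; ring)
  have ht : ((b - t) / (b - a)) • a + ((t - a) / (b - a)) • b = t := by
    simp only [smul_eq_mul]; field_simp; ring
  rw [ht, smul_eq_mul, smul_eq_mul] at key
  calc (b - a) * f t ≤ (b - a) * ((b - t) / (b - a) * f a + (t - a) / (b - a) * f b) := by
        gcongr
    _ = (b - t) * f a + (t - a) * f b := by field_simp

theorem Real.mul_rpow_mul_rpow_le_chord {a b x y c : ℝ} (ha : 0 ≤ a) (hx : 0 < x)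
    (hay : a * x ≤ y) (hyb : y ≤ b * x) (hc : 1 ≤ c) :
    (b - a) * (y ^ c * x ^ (1 - c)) ≤ (b * x - y) * a ^ c + (y - a * x) * b ^ c := by
  have hy : 0 ≤ y := le_trans (by positivity) hay
  have hchord := (convexOn_rpow hc).mul_le_chord (Set.mem_Ici.2 ha)
    (Set.mem_Ici.2 (ha.trans ((le_div_iff₀ hx).2 hay |>.trans ((div_le_iff₀ hx).2 hyb))))
    ((le_div_iff₀ hx).2 hay) ((div_le_iff₀ hx).2 hyb)
  have hhom : y ^ c * x ^ (1 - c) = x * (y / x) ^ c := by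
    rw [rpow_sub hx, rpow_one, div_rpow hy hx.le]
    field_simp
  calc (b - a) * (y ^ c * x ^ (1 - c)) = x * ((b - a) * (y / x) ^ c) := by rw [hhom]; ring
    _ ≤ x * ((b - y / x) * a ^ c + (y / x - a) * b ^ c) :=
      mul_le_mul_of_nonneg_left hchord hx.le
    _ = (b * x - y) * a ^ c + (y - a * x) * b ^ c := by field_simp

theorem Real.exp_chord_mul_cosh_eq (ε c : ℝ) :
    ((exp ε - 1) * exp (-ε) ^ c + (1 - exp (-ε)) * exp ε ^ c) * cosh (ε / 2) =
      (exp ε - exp (-ε)) * cosh ((c - 1 / 2) * ε) := by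
  simp only [← exp_mul, cosh_eq]
  have e1 : exp ε = exp (ε / 2) ^ 2 := by rw [← exp_nat_mul]; ring_nf
  have e2 : exp (-ε * c) = (exp (c * ε))⁻¹ := by rw [← exp_neg]; ring_nf
  have e3 : exp (ε * c) = exp (c * ε) := by ring_nf
  have e4 : exp ((c - 1 / 2) * ε) = exp (c * ε) / exp (ε / 2) := by rw [← exp_sub]; ring_nf
  have e5 : exp (-((c - 1 / 2) * ε)) = exp (ε / 2) / exp (c * ε) := by rw [← exp_sub]; ring_nf
  rw [e1, e2, e3, e4, e5, exp_neg, exp_neg, e1]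
  field_simp
  ring

theorem Real.exp_chord_le_mul_exp {ε c : ℝ} (hε : 0 ≤ ε) (hc : 1 ≤ c) :
    (exp ε - 1) * exp (-ε) ^ c + (1 - exp (-ε)) * exp ε ^ c ≤
      (exp ε - exp (-ε)) * exp (c * (c - 1) * ε ^ 2 / 2) := by
  have hD : 0 ≤ exp ε - exp (-ε) := sub_nonneg.2 (exp_le_exp.2 (by linarith))
  have hcosh := cosh_le_exp_mul_cosh (u := ε / 2) (v := (c - 1 / 2) * ε) (by positivity)
    (by nlinarith)
  refine le_of_mul_le_mul_right ?_ (cosh_pos (ε / 2))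
  calc _ = (exp ε - exp (-ε)) * cosh ((c - 1 / 2) * ε) := exp_chord_mul_cosh_eq ε c
    _ ≤ (exp ε - exp (-ε)) *
          (exp ((((c - 1 / 2) * ε) ^ 2 - (ε / 2) ^ 2) / 2) * cosh (ε / 2)) :=
      mul_le_mul_of_nonneg_left hcosh hD
    _ = _ := by ring_nf

/-- `exp ((c - 1) D_c(P ‖ Q))`, for the Rényi divergence `D_c` of order `c`. -/
noncomputable def renyiMoment {α : Type*} (c : ℝ) (P Q : α → ℝ≥0∞) : ℝ≥0∞ :=
  ∑' a, P a ^ c * Q a ^ (1 - c)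

theorem PMF.tsum_le_ofReal_add {α : Type*} (P Q : PMF α) {f : α → ℝ≥0∞} {A B : ℝ}
    (hf : ∀ a, f a ≤ ENNReal.ofReal (A * (P a).toReal + B * (Q a).toReal))
    (hnonneg : ∀ a, 0 ≤ A * (P a).toReal + B * (Q a).toReal) :
    ∑' a, f a ≤ ENNReal.ofReal (A + B) := by
  have hsum (R : PMF α) : HasSum (fun a ↦ (R a).toReal) 1 := by
    have h := ENNReal.hasSum_toReal (f := R) (by rw [R.tsum_coe]; exact ENNReal.one_ne_top)
    rwa [← ENNReal.tsum_toReal_eq R.apply_ne_top, R.tsum_coe, ENNReal.toReal_one] at h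
  have hlin := ((hsum P).mul_left A).add ((hsum Q).mul_left B)
  calc ∑' a, f a ≤ ∑' a, ENNReal.ofReal (A * (P a).toReal + B * (Q a).toReal) :=
      ENNReal.tsum_le_tsum hf
    _ = ENNReal.ofReal (A + B) := by
      rw [← ENNReal.ofReal_tsum_of_nonneg hnonneg hlin.summable, hlin.tsum_eq, mul_one, mul_one]

theorem ENNReal.toReal_le_mul_toReal_of_le {p q : ℝ≥0∞} {r : ℝ} (hq : q ≠ ⊤) (hr : 0 ≤ r)
    (h : p ≤ ENNReal.ofReal r * q) : p.toReal ≤ r * q.toReal := by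
  simpa [ENNReal.toReal_mul, hr] using
    ENNReal.toReal_mono (ENNReal.mul_ne_top ENNReal.ofReal_ne_top hq) h

theorem ENNReal.rpow_mul_rpow_le_ofReal_chord {p q : ℝ≥0∞} (hp : p ≠ ⊤) (hq : q ≠ ⊤)
    {a b c : ℝ} (ha : 0 ≤ a) (hab : a < b) (hc : 1 ≤ c)
    (hap : a * q.toReal ≤ p.toReal) (hpb : p.toReal ≤ b * q.toReal) :
    p ^ c * q ^ (1 - c) ≤ ENNReal.ofReal
      (((b * q.toReal - p.toReal) * a ^ c + (p.toReal - a * q.toReal) * b ^ c) / (b - a)) := by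
  rcases eq_or_ne q 0 with rfl | hq0
  · have hp0 : p = 0 := by
      rw [← ENNReal.ofReal_toReal hp, ENNReal.ofReal_eq_zero]; simpa using hpb
    simp [hp0, ENNReal.zero_rpow_of_pos (zero_lt_one.trans_le hc)]
  have hqpos : 0 < q.toReal := ENNReal.toReal_pos hq0 hq
  have hreal : p ^ c * q ^ (1 - c) = ENNReal.ofReal (p.toReal ^ c * q.toReal ^ (1 - c)) := by
    rw [ENNReal.ofReal_mul (by positivity), ← ENNReal.ofReal_rpow_of_pos hqpos,
      ← ENNReal.ofReal_rpow_of_nonneg ENNReal.toReal_nonneg (by linarith),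
      ENNReal.ofReal_toReal hp, ENNReal.ofReal_toReal hq]
  rw [hreal]
  refine ENNReal.ofReal_le_ofReal ?_
  rw [le_div_iff₀' (sub_pos.2 hab)]
  exact mul_rpow_mul_rpow_le_chord ha hqpos hap hpb hc

theorem PMF.renyiMoment_le_exp_of_le_exp_mul {α : Type*} (P Q : PMF α) {ε c : ℝ} (hε : 0 < ε)
    (hc : 1 ≤ c) (hPQ : ∀ x, P x ≤ ENNReal.ofReal (exp ε) * Q x)
    (hQP : ∀ x, Q x ≤ ENNReal.ofReal (exp ε) * P x) :
    renyiMoment c P Q ≤ ENNReal.ofReal (exp (c * (c - 1) * ε ^ 2 / 2)) := by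
  have hab : exp (-ε) < exp ε := exp_lt_exp.2 (by linarith)
  have hratio (x : α) : exp (-ε) * (Q x).toReal ≤ (P x).toReal ∧
      (P x).toReal ≤ exp ε * (Q x).toReal := by
    refine ⟨?_, ENNReal.toReal_le_mul_toReal_of_le (Q.apply_ne_top x) (exp_pos ε).le (hPQ x)⟩
    calc exp (-ε) * (Q x).toReal
        ≤ exp (-ε) * (exp ε * (P x).toReal) := by
          gcongr
          exact ENNReal.toReal_le_mul_toReal_of_le (P.apply_ne_top x) (exp_pos ε).le (hQP x)
      _ = (P x).toReal := by rw [← mul_assoc, ← exp_add, neg_add_cancel, exp_zero, one_mul]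
  set A := (exp ε ^ c - exp (-ε) ^ c) / (exp ε - exp (-ε))
  set B := (exp ε * exp (-ε) ^ c - exp (-ε) * exp ε ^ c) / (exp ε - exp (-ε))
  have hchord (x : α) : A * (P x).toReal + B * (Q x).toReal =
      ((exp ε * (Q x).toReal - (P x).toReal) * exp (-ε) ^ c +
        ((P x).toReal - exp (-ε) * (Q x).toReal) * exp ε ^ c) / (exp ε - exp (-ε)) := by
    ring
  refine (PMF.tsum_le_ofReal_add P Q (A := A) (B := B) (fun x ↦ ?_) (fun x ↦ ?_)).trans ?_
  · rw [hchord]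
    exact ENNReal.rpow_mul_rpow_le_ofReal_chord (P.apply_ne_top x) (Q.apply_ne_top x)
      (exp_pos _).le hab hc (hratio x).1 (hratio x).2
  · obtain ⟨hlo, hhi⟩ := hratio x
    rw [hchord]
    exact div_nonneg (add_nonneg (mul_nonneg (by linarith) (by positivity))
      (mul_nonneg (by linarith) (by positivity))) (sub_pos.2 hab).le
  · have hAB : A + B = ((exp ε - 1) * exp (-ε) ^ c + (1 - exp (-ε)) * exp ε ^ c) /
        (exp ε - exp (-ε)) := by ring
    refine ENNReal.ofReal_le_ofReal ?_
    rw [hAB, div_le_iff₀' (sub_pos.2 hab)]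
    exact exp_chord_le_mul_exp hε.le hc

theorem joint_succ_apply_nil {𝒪 : Type*} (p : ℕ → List 𝒪 → PMF 𝒪) (k : ℕ) :
    joint p (k + 1) [] = 0 := by
  simp [joint, PMF.bind_apply, PMF.map_apply]

theorem joint_succ_apply_append_singleton {𝒪 : Type*} (p : ℕ → List 𝒪 → PMF 𝒪) (k : ℕ)
    (h : List 𝒪) (a : 𝒪) : joint p (k + 1) (h ++ [a]) = joint p k h * p k h a := by
  classical
  simp only [joint, PMF.bind_apply, PMF.map_apply]
  rw [tsum_eq_single h fun h' hh' ↦ by simp [hh'.symm]]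
  simp

theorem ENNReal.tsum_list_eq_tsum_tsum_append_singleton {α : Type*} (f : List α → ℝ≥0∞)
    (hf : f [] = 0) : ∑' l, f l = ∑' (l : List α) (a : α), f (l ++ [a]) := by
  have hinj : Function.Injective fun x : List α × α ↦ x.1 ++ [x.2] := by
    rintro ⟨l, a⟩ ⟨l', a'⟩ h
    simpa using h
  have hsupp : Function.support f ⊆ Set.range fun x : List α × α ↦ x.1 ++ [x.2] := by
    intro l hl
    rcases l.eq_nil_or_concat' with rfl | ⟨l', a, rfl⟩
    · exact absurd hf hl
    · exact ⟨(l', a), rfl⟩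
  rw [← hinj.tsum_eq hsupp]
  exact ENNReal.tsum_prod (f := fun l a ↦ f (l ++ [a]))

theorem renyiMoment_joint_succ {𝒪 : Type*} (p q : ℕ → List 𝒪 → PMF 𝒪) (k : ℕ) {c : ℝ}
    (hc : 0 < c) :
    renyiMoment c (joint p (k + 1)) (joint q (k + 1)) =
      ∑' h, joint p k h ^ c * joint q k h ^ (1 - c) * renyiMoment c (p k h) (q k h) := by
  rw [renyiMoment, ENNReal.tsum_list_eq_tsum_tsum_append_singleton _
    (by simp [joint_succ_apply_nil, ENNReal.zero_rpow_of_pos hc])]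
  refine tsum_congr fun h ↦ ?_
  rw [renyiMoment, ← ENNReal.tsum_mul_left]
  refine tsum_congr fun a ↦ ?_
  rw [joint_succ_apply_append_singleton, joint_succ_apply_append_singleton,
    ENNReal.mul_rpow_of_ne_top (PMF.apply_ne_top _ _) (PMF.apply_ne_top _ _),
    ENNReal.mul_rpow_of_ne_top (PMF.apply_ne_top _ _) (PMF.apply_ne_top _ _)]
  ring

theorem renyiMoment_joint_le {𝒪 : Type*} (p q : ℕ → List 𝒪 → PMF 𝒪) {c : ℝ} (hc : 0 < c)
    {M : ℝ≥0∞} (hM : ∀ t h, renyiMoment c (p t h) (q t h) ≤ M) (k : ℕ) :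
    renyiMoment c (joint p k) (joint q k) ≤ M ^ k := by
  induction k with
  | zero =>
    rw [renyiMoment, tsum_eq_single [] fun h hh ↦ by
      simp [joint, hh, ENNReal.zero_rpow_of_pos hc]]
    simp [joint]
  | succ k ih =>
    rw [renyiMoment_joint_succ p q k hc, pow_succ]
    calc ∑' h, joint p k h ^ c * joint q k h ^ (1 - c) * renyiMoment c (p k h) (q k h)
        ≤ ∑' h, joint p k h ^ c * joint q k h ^ (1 - c) * M :=
          ENNReal.tsum_le_tsum fun h ↦ mul_le_mul_right (hM k h) _
      _ = renyiMoment c (joint p k) (joint q k) * M := ENNReal.tsum_mul_right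
      _ ≤ M ^ k * M := mul_le_mul_left ih _

theorem ENNReal.rpow_le_rpow_of_nonpos {x y : ℝ≥0∞} {z : ℝ} (hxy : x ≤ y) (hz : z ≤ 0) :
    y ^ z ≤ x ^ z := by
  rw [← neg_neg z, ENNReal.rpow_neg x, ENNReal.rpow_neg y]
  exact ENNReal.inv_le_inv.2 (ENNReal.rpow_le_rpow hxy (neg_nonneg.2 hz))

theorem ENNReal.le_exp_mul_add_rpow_mul_rpow {p q : ℝ≥0∞} (hp : p ≠ ⊤) {c : ℝ} (hc : 1 ≤ c)
    (B : ℝ) :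
    p ≤ ENNReal.ofReal (exp B) * q +
      ENNReal.ofReal (exp (-((c - 1) * B))) * (p ^ c * q ^ (1 - c)) := by
  rcases le_or_gt p (ENNReal.ofReal (exp B) * q) with h | h
  · exact le_add_right h
  have hp0 : p ≠ 0 := (zero_le.trans_lt h).ne'
  have hq : q ≤ ENNReal.ofReal (exp (-B)) * p := by
    calc q = ENNReal.ofReal (exp (-B)) * (ENNReal.ofReal (exp B) * q) := by
          rw [← mul_assoc, ← ENNReal.ofReal_mul (exp_pos _).le, ← exp_add, neg_add_cancel,
            exp_zero, ENNReal.ofReal_one, one_mul]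
      _ ≤ ENNReal.ofReal (exp (-B)) * p := by gcongr
  have hsplit : p ^ c * (ENNReal.ofReal (exp (-B)) * p) ^ (1 - c) =
      ENNReal.ofReal (exp ((c - 1) * B)) * p := by
    rw [ENNReal.mul_rpow_of_ne_top ENNReal.ofReal_ne_top hp,
      ENNReal.ofReal_rpow_of_pos (exp_pos _), ← exp_mul, mul_left_comm,
      ← ENNReal.rpow_add _ _ hp0 hp, add_sub_cancel, ENNReal.rpow_one]
    ring_nf
  calc p = ENNReal.ofReal (exp (-((c - 1) * B))) *
        (ENNReal.ofReal (exp ((c - 1) * B)) * p) := by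
        rw [← mul_assoc, ← ENNReal.ofReal_mul (exp_pos _).le, ← exp_add, neg_add_cancel,
          exp_zero, ENNReal.ofReal_one, one_mul]
    _ ≤ ENNReal.ofReal (exp (-((c - 1) * B))) * (p ^ c * q ^ (1 - c)) := by
        rw [← hsplit]
        exact mul_le_mul_right
          (mul_le_mul_right (ENNReal.rpow_le_rpow_of_nonpos hq (by linarith)) _) _
    _ ≤ _ := le_add_self

theorem tsum_subtype_le_exp_mul_add_renyiMoment {α : Type*} (P Q : α → ℝ≥0∞)
    (hP : ∀ a, P a ≠ ⊤) {c : ℝ} (hc : 1 ≤ c) (B : ℝ) (E : Set α) :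
    ∑' a : E, P a ≤ ENNReal.ofReal (exp B) * ∑' a : E, Q a +
      ENNReal.ofReal (exp (-((c - 1) * B))) * renyiMoment c P Q := by
  calc ∑' a : E, P a
      ≤ ∑' a : E, (ENNReal.ofReal (exp B) * Q a +
          ENNReal.ofReal (exp (-((c - 1) * B))) * (P a ^ c * Q a ^ (1 - c))) :=
        ENNReal.tsum_le_tsum fun a ↦ ENNReal.le_exp_mul_add_rpow_mul_rpow (hP a) hc B
    _ = ENNReal.ofReal (exp B) * ∑' a : E, Q a +
          ENNReal.ofReal (exp (-((c - 1) * B))) * ∑' a : E, P a ^ c * Q a ^ (1 - c) := by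
        rw [ENNReal.tsum_add, ENNReal.tsum_mul_left, ENNReal.tsum_mul_left]
    _ ≤ _ := by
        gcongr
        exact ENNReal.tsum_comp_le_tsum_of_injective Subtype.val_injective
          fun a ↦ P a ^ c * Q a ^ (1 - c)

theorem tsum_joint_le_exp_mul_add {𝒪 : Type*} (p q : ℕ → List 𝒪 → PMF 𝒪) {ε : ℝ}
    (hε : 0 < ε) {k : ℕ} (hk : 0 < k)
    (hDP : ∀ t h a, p t h a ≤ ENNReal.ofReal (exp ε) * q t h a ∧
      q t h a ≤ ENNReal.ofReal (exp ε) * p t h a)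
    {δ : ℝ} (hδ0 : 0 < δ) (hδ1 : δ < 1) (E : Set (List 𝒪)) :
    ∑' h : E, joint p k h ≤
      ENNReal.ofReal (exp (k * ε ^ 2 / 2 + ε * √(2 * k * log (1 / δ)))) *
        ∑' h : E, joint q k h + ENNReal.ofReal δ := by
  set L := log (1 / δ)
  set B := k * ε ^ 2 / 2 + ε * √(2 * k * L)
  have hL : 0 ≤ L := log_nonneg (one_le_one_div hδ0 hδ1.le)
  set s := √(2 * L / k) / ε
  have hs : 0 ≤ s := by positivity
  have hmoment : renyiMoment (1 + s) (joint p k) (joint q k) ≤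
      ENNReal.ofReal (exp (k * ((1 + s) * s * ε ^ 2 / 2))) := by
    calc renyiMoment (1 + s) (joint p k) (joint q k)
        ≤ ENNReal.ofReal (exp ((1 + s) * (1 + s - 1) * ε ^ 2 / 2)) ^ k :=
          renyiMoment_joint_le p q (by positivity) (fun t h ↦
            (p t h).renyiMoment_le_exp_of_le_exp_mul (q t h) hε (by linarith)
              (fun a ↦ (hDP t h a).1) (fun a ↦ (hDP t h a).2)) k
      _ = _ := by rw [← ENNReal.ofReal_pow (exp_pos _).le, ← exp_nat_mul, add_sub_cancel_left]
  have hsq : k * (s * ε) ^ 2 = 2 * L := by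
    rw [div_mul_cancel₀ _ hε.ne', sq_sqrt (by positivity)]
    field_simp
  have hcross : s * ε * √(2 * k * L) = 2 * L := by
    rw [div_mul_cancel₀ _ hε.ne', ← sqrt_mul (by positivity),
      show 2 * L / k * (2 * k * L) = (2 * L) ^ 2 by field_simp, sqrt_sq (by positivity)]
  have hexponent : -(s * B) + k * ((1 + s) * s * ε ^ 2 / 2) = log δ := by
    rw [show log δ = -L by simp only [L, one_div, log_inv, neg_neg]]
    linear_combination (1 / 2 : ℝ) * hsq - hcross
  calc ∑' h : E, joint p k h
      ≤ ENNReal.ofReal (exp B) * ∑' h : E, joint q k h +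
          ENNReal.ofReal (exp (-((1 + s - 1) * B))) *
            renyiMoment (1 + s) (joint p k) (joint q k) :=
        tsum_subtype_le_exp_mul_add_renyiMoment _ _ (fun h ↦ PMF.apply_ne_top _ h)
          (by linarith) B E
    _ ≤ ENNReal.ofReal (exp B) * ∑' h : E, joint q k h +
          ENNReal.ofReal (exp (-(s * B))) *
            ENNReal.ofReal (exp (k * ((1 + s) * s * ε ^ 2 / 2))) := by
        rw [add_sub_cancel_left]
        gcongr
    _ = ENNReal.ofReal (exp B) * ∑' h : E, joint q k h + ENNReal.ofReal δ := by
        rw [← ENNReal.ofReal_mul (exp_pos _).le, ← exp_add, hexponent, exp_log hδ0]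

/-- Advanced composition via zCDP: the adaptive composition of `k` pure `ε`-DP algorithms
satisfies `(½kε² + ε√(2k log(1/δ)), δ)`-differential privacy for every `δ ∈ (0,1)`. -/
theorem adaptive_composition_pure_dp {𝒪 : Type*} (pS pS' : ℕ → List 𝒪 → PMF 𝒪)
    (ε : ℝ) (hε : 0 ≤ ε) (k : ℕ)
    (hDP : ∀ (t : ℕ) (h : List 𝒪) (a : 𝒪),
      (pS t h) a ≤ ENNReal.ofReal (Real.exp ε) * (pS' t h) a ∧
      (pS' t h) a ≤ ENNReal.ofReal (Real.exp ε) * (pS t h) a)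
    (δ : ℝ) (hδ0 : 0 < δ) (hδ1 : δ < 1) :
    ∀ E : Set (List 𝒪),
      ∑' h : E, (joint pS k) h ≤
        ENNReal.ofReal (Real.exp (k * ε ^ 2 / 2 + ε * Real.sqrt (2 * k * Real.log (1 / δ))))
          * ∑' h : E, (joint pS' k) h + ENNReal.ofReal δ ∧
      ∑' h : E, (joint pS' k) h ≤
        ENNReal.ofReal (Real.exp (k * ε ^ 2 / 2 + ε * Real.sqrt (2 * k * Real.log (1 / δ))))
          * ∑' h : E, (joint pS k) h + ENNReal.ofReal δ := by
  intro E
  rcases hε.eq_or_lt with rfl | hε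
  · have hp : pS = pS' := funext₂ fun t h ↦ PMF.ext fun a ↦
      le_antisymm (by simpa using (hDP t h a).1) (by simpa using (hDP t h a).2)
    subst hp
    simp
  rcases k.eq_zero_or_pos with rfl | hk
  · simp [joint]
  exact ⟨tsum_joint_le_exp_mul_add pS pS' hε hk hDP hδ0 hδ1 E,
    tsum_joint_le_exp_mul_add pS' pS hε hk (fun t h a ↦ (hDP t h a).symm) hδ0 hδ1 E⟩
end

section
/- Let q_1, q_2, … : 𝒳 → [0,1] be a sequence of queries and S = (X_1,…,X_n). For each t, let S_t = {X_i ∈ S : Σ_{j=1}^t q_j(X_i)² ≤ 2Bσ²/α}, and report a_t = Σ_{X_i∈S_t} q_t(X_i) + ξ_t with ξ_t ~ N(0,σ²) independent. Then the whole sequence of reports (a_1, a_2, …) is (α,B)-Rényi differentially private. -/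
/-!
Removing `X_i` changes only the means of the reports: round `t`'s mean drops by
`d_t = q_t(X_i)` if `X_i` is still active at round `t`, and by `0` otherwise. The reports are
independent Gaussians of common variance `σ²`, so the Rényi divergence of order `α` between the
two joint laws is `α Σ_t d_t² / (2σ²)` in either direction. Since the running total
`Σ_{j ≤ t} q_j(X_i)²` is nondecreasing, the rounds in which `X_i` is active form an initial
segment, and `Σ_t d_t²` is the running total at the last of them, at most `2Bσ²/α`.
-/
open MeasureTheory ProbabilityTheory Real

open Classical in
/-- Mean of round `t`'s report when the dataset consists of the points `S i`, `i ∈ I`: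
the sum of `q_t` over the points of `I` that are still active at round `t`
(those with `Σ_{j≤t} q_j(X_i)² ≤ 2Bσ²/α`). -/
noncomputable def filteredMean {𝒳 : Type*} {n : ℕ} (S : Fin n → 𝒳) (q : ℕ → 𝒳 → ℝ)
    (B α : ℝ) (σ : NNReal) (I : Finset (Fin n)) (t : ℕ) : ℝ :=
  ∑ i ∈ I.filter (fun i => ∑ j ∈ Finset.range (t + 1), (q j (S i)) ^ 2
      ≤ 2 * B * (σ : ℝ) ^ 2 / α), q t (S i)

/-- Joint law of the first `k` reports `a_t = Σ_{X_i ∈ S_t} q_t(X_i) + ξ_t`,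
`ξ_t ~ N(0,σ²)` independent, on the dataset indexed by `I`. -/
noncomputable def filteredLaw {𝒳 : Type*} {n : ℕ} (S : Fin n → 𝒳) (q : ℕ → 𝒳 → ℝ)
    (B α : ℝ) (σ : NNReal) (I : Finset (Fin n)) (k : ℕ) : Measure (Fin k → ℝ) :=
  Measure.map (fun ξ t => filteredMean S q B α σ I (t : Fin k) + ξ t)
    (Measure.pi fun _ : Fin k => gaussianReal 0 (σ ^ 2))

open ENNReal NNReal Finset

section PiDensity

variable {α : Type*} [MeasurableSpace α]

theorem lintegral_fin_nat_prod_eq_prod {n : ℕ} {μ : Fin n → Measure α} [∀ i, SigmaFinite (μ i)]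
    {f : Fin n → α → ℝ≥0∞} (hf : ∀ i, Measurable (f i)) :
    ∫⁻ x, ∏ i, f i (x i) ∂Measure.pi μ = ∏ i, ∫⁻ x, f i x ∂μ i := by
  induction n with
  | zero => simp
  | succ n ih =>
    calc _ = ∫⁻ x : α × (Fin n → α), f 0 x.1 * ∏ i : Fin n, f i.succ (x.2 i)
            ∂(μ 0).prod (Measure.pi fun i => μ i.succ) := by
          rw [← (measurePreserving_piFinSuccAbove μ 0).symm.lintegral_comp_emb
            (MeasurableEquiv.measurableEmbedding _)]
          simp_rw [MeasurableEquiv.piFinSuccAbove_symm_apply, Fin.insertNthEquiv,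
            Fin.prod_univ_succ, Fin.insertNth_zero, Equiv.coe_fn_mk, Fin.cons_succ,
            Fin.zero_succAbove, cast_eq, Fin.cons_zero]
      _ = (∫⁻ x, f 0 x ∂μ 0) * ∏ i : Fin n, ∫⁻ x, f i.succ x ∂μ i.succ := by
          rw [lintegral_prod_mul (g := fun y : Fin n → α => ∏ i, f i.succ (y i))
            (hf 0).aemeasurable (measurable_prod _ fun i _ =>
              (hf i.succ).comp (measurable_pi_apply i)).aemeasurable,
            ih fun i => hf i.succ]
      _ = _ := (Fin.prod_univ_succ fun i => ∫⁻ x, f i x ∂μ i).symm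

variable {ι : Type*} [Fintype ι] {μ : ι → Measure α} [∀ i, SigmaFinite (μ i)]

theorem lintegral_fintype_prod_eq_prod {f : ι → α → ℝ≥0∞} (hf : ∀ i, Measurable (f i)) :
    ∫⁻ x, ∏ i, f i (x i) ∂Measure.pi μ = ∏ i, ∫⁻ x, f i x ∂μ i := by
  let e := (Fintype.equivFin ι).symm
  rw [← (measurePreserving_piCongrLeft _ e).lintegral_comp_emb
    (MeasurableEquiv.measurableEmbedding _)]
  simp_rw [← e.prod_comp, MeasurableEquiv.coe_piCongrLeft, Equiv.piCongrLeft_apply_apply]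
  exact lintegral_fin_nat_prod_eq_prod fun i => hf (e i)

theorem pi_withDensity {d : ι → α → ℝ≥0∞} (hd : ∀ i, Measurable (d i))
    [∀ i, SigmaFinite ((μ i).withDensity (d i))] :
    Measure.pi (fun i => (μ i).withDensity (d i))
      = (Measure.pi μ).withDensity (fun x => ∏ i, d i (x i)) := by
  classical
  refine Measure.pi_eq fun s hs => ?_
  have h_indicator : (Set.univ.pi s).indicator (fun x => ∏ i, d i (x i))
      = fun x => ∏ i, (s i).indicator (d i) (x i) := by
    ext x
    simp [Set.indicator_apply, prod_ite_zero]
  rw [withDensity_apply _ (.univ_pi hs), ← lintegral_indicator (.univ_pi hs), h_indicator,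
    lintegral_fintype_prod_eq_prod fun i => (hd i).indicator (hs i)]
  simp_rw [lintegral_indicator (hs _), withDensity_apply _ (hs _)]

end PiDensity

section Gaussian

variable {v : ℝ≥0}

noncomputable def gaussianLikelihoodRatio (m m' : ℝ) (v : ℝ≥0) (x : ℝ) : ℝ≥0∞ :=
  ENNReal.ofReal (gaussianPDFReal m v x / gaussianPDFReal m' v x)

lemma measurable_gaussianLikelihoodRatio (m m' : ℝ) (v : ℝ≥0) :
    Measurable (gaussianLikelihoodRatio m m' v) :=
  ((measurable_gaussianPDFReal m v).div (measurable_gaussianPDFReal m' v)).ennreal_ofReal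

lemma withDensity_gaussianLikelihoodRatio (m m' : ℝ) (hv : v ≠ 0) :
    (gaussianReal m' v).withDensity (gaussianLikelihoodRatio m m' v) = gaussianReal m v := by
  rw [gaussianReal_of_var_ne_zero _ hv, gaussianReal_of_var_ne_zero _ hv,
    ← withDensity_mul volume (measurable_gaussianPDF m' v)
      (measurable_gaussianLikelihoodRatio m m' v)]
  congr 1
  funext x
  simp only [Pi.mul_apply, gaussianPDF, gaussianLikelihoodRatio,
    ← ENNReal.ofReal_mul (gaussianPDFReal_nonneg m' v x),
    mul_div_cancel₀ _ (gaussianPDFReal_pos m' v x hv).ne']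

-- Completing the square in the exponent.
lemma gaussianPDFReal_mul_div_rpow (m m' : ℝ) (hv : v ≠ 0) (α x : ℝ) :
    gaussianPDFReal m' v x * (gaussianPDFReal m v x / gaussianPDFReal m' v x) ^ α
      = exp (α * (α - 1) * (m - m') ^ 2 / (2 * v)) *
        gaussianPDFReal (m' + α * (m - m')) v x := by
  have hc : (0 : ℝ) < (√(2 * π * v))⁻¹ := inv_pos.mpr (Real.sqrt_pos.mpr (by positivity))
  simp only [gaussianPDFReal]
  rw [mul_div_mul_left _ _ hc.ne', ← Real.exp_sub, ← Real.exp_mul, mul_assoc, ← Real.exp_add,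
    mul_comm (exp _), mul_assoc _ (exp _) (exp _), ← Real.exp_add]
  congr 1
  field_simp
  ring_nf

lemma integral_gaussianLikelihoodRatio_rpow (m m' : ℝ) (hv : v ≠ 0) (α : ℝ) :
    ∫ x, (gaussianLikelihoodRatio m m' v x).toReal ^ α ∂gaussianReal m' v
      = exp (α * (α - 1) * (m - m') ^ 2 / (2 * v)) := by
  rw [gaussianReal_of_var_ne_zero _ hv,
    integral_withDensity_eq_integral_toReal_smul (measurable_gaussianPDF m' v)
      (ae_of_all _ fun _ => ENNReal.ofReal_lt_top)]
  have h_tilt (x : ℝ) : (gaussianPDF m' v x).toReal • (gaussianLikelihoodRatio m m' v x).toReal ^ α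
      = exp (α * (α - 1) * (m - m') ^ 2 / (2 * v)) *
        gaussianPDFReal (m' + α * (m - m')) v x := by
    rw [toReal_gaussianPDF, smul_eq_mul, gaussianLikelihoodRatio, ENNReal.toReal_ofReal
      (div_nonneg (gaussianPDFReal_nonneg m v x) (gaussianPDFReal_nonneg m' v x))]
    exact gaussianPDFReal_mul_div_rpow m m' hv α x
  simp_rw [h_tilt]
  rw [integral_const_mul, integral_gaussianPDFReal_eq_one _ hv, mul_one]

variable {ι : Type*} [Fintype ι]

lemma pi_gaussianReal_eq_withDensity (hv : v ≠ 0) (m m' : ι → ℝ) :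
    Measure.pi (fun t => gaussianReal (m t) v)
      = (Measure.pi fun t => gaussianReal (m' t) v).withDensity
          (fun x => ∏ t, gaussianLikelihoodRatio (m t) (m' t) v (x t)) := by
  have : ∀ t, SigmaFinite ((gaussianReal (m' t) v).withDensity
      (gaussianLikelihoodRatio (m t) (m' t) v)) := fun t => by
    rw [withDensity_gaussianLikelihoodRatio _ _ hv]; infer_instance
  rw [← pi_withDensity fun t => measurable_gaussianLikelihoodRatio (m t) (m' t) v]
  simp_rw [withDensity_gaussianLikelihoodRatio _ _ hv]

theorem renyiDiv_pi_gaussianReal (hv : v ≠ 0) {α : ℝ} (hα : α ≠ 1) (m m' : ι → ℝ) :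
    renyiDiv α (Measure.pi fun t => gaussianReal (m t) v)
        (Measure.pi fun t => gaussianReal (m' t) v)
      = α * ∑ t, (m t - m' t) ^ 2 / (2 * v) := by
  have h_rnDeriv := Measure.rnDeriv_withDensity (Measure.pi fun t => gaussianReal (m' t) v)
    (f := fun x => ∏ t, gaussianLikelihoodRatio (m t) (m' t) v (x t))
    (measurable_prod _ fun t _ =>
      (measurable_gaussianLikelihoodRatio (m t) (m' t) v).comp (measurable_pi_apply t))
  rw [← pi_gaussianReal_eq_withDensity hv] at h_rnDeriv
  rw [renyiDiv, integral_congr_ae (h_rnDeriv.mono fun x hx => by rw [hx])]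
  simp_rw [ENNReal.toReal_prod, ← Real.finsetProd_rpow _ _ (fun _ _ => ENNReal.toReal_nonneg)]
  rw [integral_fintype_prod_eq_prod
    (fun t y => (gaussianLikelihoodRatio (m t) (m' t) v y).toReal ^ α)]
  simp_rw [integral_gaussianLikelihoodRatio_rpow _ _ hv, ← Real.exp_sum, Real.log_exp,
    mul_sum]
  have hα' : α - 1 ≠ 0 := sub_ne_zero.mpr hα
  refine sum_congr rfl fun t _ => ?_
  field_simp

theorem renyiDiv_pi_gaussianReal_le (hv : v ≠ 0) {α B : ℝ} (hα : 1 < α) {m m' : ι → ℝ}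
    (h : ∑ t, (m t - m' t) ^ 2 ≤ 2 * B * v / α) :
    renyiDiv α (Measure.pi fun t => gaussianReal (m t) v)
        (Measure.pi fun t => gaussianReal (m' t) v) ≤ B := by
  have hα_pos : 0 < α := by linarith
  rw [le_div_iff₀ hα_pos] at h
  rw [renyiDiv_pi_gaussianReal hv hα.ne' m m', ← sum_div, mul_div_assoc',
    div_le_iff₀ (by positivity)]
  linarith

end Gaussian

section Filtering

lemma sum_filter_partialSum_le {g : ℕ → ℝ} (hg : ∀ t, 0 ≤ g t) {C : ℝ} (hC : 0 ≤ C) (k : ℕ) :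
    ∑ t ∈ (range k).filter (fun t => ∑ j ∈ range (t + 1), g j ≤ C), g t ≤ C := by
  induction k with
  | zero => simpa using hC
  | succ k ih =>
    rw [range_add_one, filter_insert]
    split_ifs with hk
    · refine le_trans (sum_le_sum_of_subset_of_nonneg ?_ fun t _ _ => hg t) hk
      exact insert_subset (self_mem_range_succ k)
        ((filter_subset _ _).trans (range_subset_range.mpr k.le_succ))
    · exact ih

variable {𝒳 : Type*} {n : ℕ} (S : Fin n → 𝒳) (q : ℕ → 𝒳 → ℝ) (B α : ℝ) (σ : ℝ≥0)

lemma filteredLaw_eq_pi (I : Finset (Fin n)) (k : ℕ) :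
    filteredLaw S q B α σ I k
      = Measure.pi fun t : Fin k => gaussianReal (filteredMean S q B α σ I t) (σ ^ 2) := by
  have : ∀ t : Fin k, SigmaFinite ((gaussianReal 0 (σ ^ 2)).map
      (filteredMean S q B α σ I t + ·)) := fun t => by
    rw [gaussianReal_map_const_add]; infer_instance
  rw [filteredLaw, Measure.pi_map_pi fun t => (measurable_const_add _).aemeasurable]
  simp_rw [gaussianReal_map_const_add, zero_add]

open Classical in
lemma filteredMean_sub_filteredMean_erase (i : Fin n) (t : ℕ) :
    filteredMean S q B α σ univ t - filteredMean S q B α σ (univ.erase i) t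
      = if ∑ j ∈ range (t + 1), q j (S i) ^ 2 ≤ 2 * B * σ ^ 2 / α then q t (S i) else 0 := by
  rw [filteredMean, filteredMean, filter_erase]
  split_ifs with h
  · rw [sum_erase_eq_sub (mem_filter.mpr ⟨mem_univ i, h⟩)]
    ring
  · rw [erase_eq_of_notMem (by simpa using h), sub_self]

lemma sum_sq_filteredMean_sub_filteredMean_erase_le (hB : 0 ≤ B) (hα : 0 ≤ α) (i : Fin n)
    (k : ℕ) :
    ∑ t : Fin k, (filteredMean S q B α σ univ t - filteredMean S q B α σ (univ.erase i) t) ^ 2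
      ≤ 2 * B * σ ^ 2 / α := by
  classical
  rw [Fin.sum_univ_eq_sum_range (fun t =>
    (filteredMean S q B α σ univ t - filteredMean S q B α σ (univ.erase i) t) ^ 2)]
  simp_rw [filteredMean_sub_filteredMean_erase, ite_pow, zero_pow two_ne_zero, ← sum_filter]
  exact sum_filter_partialSum_le (fun t => sq_nonneg _) (by positivity) k

end Filtering

theorem nonadaptive_individual_filtering_general {𝒳 : Type*} {n : ℕ} (S : Fin n → 𝒳)
    (q : ℕ → 𝒳 → ℝ)
    (B : ℝ) (hB : 0 ≤ B) (α : ℝ) (hα : 1 < α) (σ : NNReal) (hσ : 0 < σ) (k : ℕ) :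
    ∀ i : Fin n,
      renyiDiv α (filteredLaw S q B α σ Finset.univ k)
          (filteredLaw S q B α σ (Finset.univ.erase i) k) ≤ B ∧
      renyiDiv α (filteredLaw S q B α σ (Finset.univ.erase i) k)
          (filteredLaw S q B α σ Finset.univ k) ≤ B := by
  intro i
  have hv : σ ^ 2 ≠ 0 := pow_ne_zero 2 hσ.ne'
  have h_sens := sum_sq_filteredMean_sub_filteredMean_erase_le S q B α σ hB (by linarith) i k
  rw [filteredLaw_eq_pi, filteredLaw_eq_pi]
  constructor
  · exact renyiDiv_pi_gaussianReal_le hv hα (by push_cast; exact h_sens)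
  · exact renyiDiv_pi_gaussianReal_le hv hα (by push_cast; simpa only [sub_sq_comm] using h_sens)

/-- Non-adaptive composition with individual privacy filtering (Proposition 2.1):
with queries `q_t : 𝒳 → [0,1]` and reports `a_t = Σ_{X_i ∈ S_t} q_t(X_i) + N(0,σ²)` where
`S_t = {X_i : Σ_{j≤t} q_j(X_i)² ≤ 2Bσ²/α}`, the whole sequence of reports is
`(α,B)`-Rényi differentially private. -/
theorem nonadaptive_individual_filtering {𝒳 : Type*} {n : ℕ} (S : Fin n → 𝒳)
    (q : ℕ → 𝒳 → ℝ) (hq : ∀ t x, 0 ≤ q t x ∧ q t x ≤ 1)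
    (B : ℝ) (hB : 0 ≤ B) (α : ℝ) (hα : 1 < α) (σ : NNReal) (hσ : 0 < σ) (k : ℕ) :
    ∀ i : Fin n,
      renyiDiv α (filteredLaw S q B α σ Finset.univ k)
          (filteredLaw S q B α σ (Finset.univ.erase i) k) ≤ B ∧
      renyiDiv α (filteredLaw S q B α σ (Finset.univ.erase i) k)
          (filteredLaw S q B α σ Finset.univ k) ≤ B :=
  nonadaptive_individual_filtering_general S q B hB α hα σ hσ k
end

section
/- There exist algorithms A₁, A₂ and random per-step Rényi parameters ρ₁, ρ₂ (with ρ₂ depending on the first output) such that the running sum ρ₁ + ρ₂ fails as an odometer: conditional on O₂ = ρ₁ + ρ₂, the α-power likelihood ratio of the two-step output can exceed e^{(α−1)(ρ₁+ρ₂)} with positive probability, unless ρ₁ = 0. Specifically, E[Loss^{(2)} | ρ₁+ρ₂] = Loss₁ · e^{(α−1)ρ₂}, which is at most e^{(α−1)(ρ₁+ρ₂)} almost surely only when Loss₁ is almost surely constant. -/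
open scoped BigOperators

/-- Failure of the naive Rényi odometer (Example 5.1).  Setting: `A₁` outputs a nonnegative
real `a₁` with laws `p1` (input `S = 0`) and `p1'` (input `S' = 1`);
`Loss₁(a) = (p1(a)/p1'(a))^α`, `ρ₁ = (α−1)⁻¹ log E_{a∼p1'}[Loss₁(a)]`, and `A₂` is chosen so
that its conditional Rényi parameter given `a₁` is `ρ₂ = a₁`.  Then:
(1) `E[Loss^{(2)} | a₁] = Loss₁(a₁)·e^{(α−1)ρ₂}`; and
(2) the odometer bound `E[Loss^{(2)} | ρ₁+ρ₂] ≤ e^{(α−1)(ρ₁+ρ₂)}` can hold almost surely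
only if `Loss₁` is a.s. constant equal to its mean `e^{(α−1)ρ₁}`. -/
theorem naive_renyi_odometer_fails (α : ℝ) (hα : 1 < α)
    (p1 p1' : PMF ℝ) (p2 p2' : ℝ → PMF ℝ)
    (Loss1 : ℝ → ℝ) (hLoss1 : ∀ a, Loss1 a = ((p1 a).toReal / (p1' a).toReal) ^ α)
    (hρ2 : ∀ a : ℝ, ∑' b : ℝ, ((p2' a) b).toReal * (((p2 a) b).toReal / ((p2' a) b).toReal) ^ α
      = Real.exp ((α - 1) * a))
    (ρ₁ : ℝ) (hsum : Summable fun a : ℝ => (p1' a).toReal * Loss1 a)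
    (hρ₁ : ∑' a : ℝ, (p1' a).toReal * Loss1 a = Real.exp ((α - 1) * ρ₁)) :
    (∀ a : ℝ,
      ∑' b : ℝ, ((p2' a) b).toReal *
          (Loss1 a * (((p2 a) b).toReal / ((p2' a) b).toReal) ^ α)
        = Loss1 a * Real.exp ((α - 1) * a)) ∧
    ((∀ a ∈ p1'.support, Loss1 a * Real.exp ((α - 1) * a)
        ≤ Real.exp ((α - 1) * (ρ₁ + a))) →
      ∀ a ∈ p1'.support, Loss1 a = Real.exp ((α - 1) * ρ₁)) := by
  constructor
  · intro a
    have key : ∀ b : ℝ, ((p2' a) b).toReal * (Loss1 a * (((p2 a) b).toReal / ((p2' a) b).toReal) ^ α)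
        = Loss1 a * (((p2' a) b).toReal * (((p2 a) b).toReal / ((p2' a) b).toReal) ^ α) := by
      intro b; ring
    simp_rw [key, tsum_mul_left, hρ2 a]
  · intro h a ha
    set E := Real.exp ((α - 1) * ρ₁) with hE
    have hle : ∀ b ∈ p1'.support, Loss1 b ≤ E := by
      intro b hb
      have hb2 := h b hb
      rw [mul_add, Real.exp_add] at hb2
      have hpos : 0 < Real.exp ((α - 1) * b) := Real.exp_pos _
      exact le_of_mul_le_mul_right (by linarith [hb2]) hpos
    have hnn : ∀ b : ℝ, 0 ≤ Loss1 b := by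
      intro b; rw [hLoss1 b]; positivity
    have htop : ∀ b : ℝ, p1' b ≠ ⊤ := fun b => (p1'.apply_lt_top b).ne
    have hsum1 : Summable fun b : ℝ => (p1' b).toReal :=
      ENNReal.summable_toReal (by rw [p1'.tsum_coe]; exact ENNReal.one_ne_top)
    have htsum1 : ∑' b : ℝ, (p1' b).toReal = 1 := by
      rw [← ENNReal.tsum_toReal_eq htop, p1'.tsum_coe, ENNReal.toReal_one]
    set g : ℝ → ℝ := fun b => (p1' b).toReal * (E - Loss1 b) with hg
    have hgeq : g = fun b => (p1' b).toReal * E - (p1' b).toReal * Loss1 b := by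
      funext b; simp only [hg]; ring
    have hgsumm : Summable g := by
      rw [hgeq]; exact (hsum1.mul_right E).sub hsum
    have hgnn : ∀ b : ℝ, 0 ≤ g b := by
      intro b
      rcases eq_or_ne (p1' b) 0 with h0 | h0
      · simp [hg, h0]
      · have hb : b ∈ p1'.support := by rwa [PMF.mem_support_iff]
        have h1 := hle b hb
        exact mul_nonneg ENNReal.toReal_nonneg (by linarith)
    have hgsum0 : ∑' b : ℝ, g b = 0 := by
      rw [hgeq, Summable.tsum_sub (hsum1.mul_right E) hsum, tsum_mul_right, htsum1, hρ₁]
      ring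
    have hga : g a ≤ 0 := hgsum0 ▸ Summable.le_tsum hgsumm a (fun b _ => hgnn b)
    have hga0 : g a = 0 := le_antisymm hga (hgnn a)
    have hpa : (p1' a).toReal ≠ 0 := by
      simp only [ne_eq, ENNReal.toReal_eq_zero_iff]
      push_neg
      exact ⟨PMF.mem_support_iff _ _ |>.mp ha, htop a⟩
    rcases mul_eq_zero.mp hga0 with h0 | h0
    · exact absurd h0 hpa
    · linarith
end
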